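/- arXiv:1907.12971 — 6 statements merged into one kernel-verified Lean document; each statement's English description precedes it below -/
import Mathlib

section
/- Let A ∈ ℝ^{M×M}, D ∈ ℝ^{N×N}, Q ∈ ℝ^{M×N}, G ∈ ℝ^{N×M}. If X : ℝ → ℝ^{M×N} is differentiable and satisfies X'(t) = A·X(t) + X(t)·D + Q − X(t)·G·X(t) for all t ≥ 0, then for every t_n ≥ 0 and every step size h > 0, X(t_n + h) = e^{hA}·X(t_n)·e^{hD} + h·∫_0^1 e^{(1−s)hA}·Q·e^{(1−s)hD} ds − h·∫_0^1 e^{(1−s)hA}·X(t_n + s·h)·G·X(t_n + s·h)·e^{(1−s)hD} ds. -/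
/-!
With `E(t) = e^{(b-t)A}` and `F(t) = e^{(b-t)D}`, the product `E(t) X(t) F(t)` has derivative
`E(t) (X'(t) - A X(t) - X(t) D) F(t)`, so for a solution of the Riccati equation the linear
terms cancel and integrating from `tₙ` to `b = tₙ + h` gives the variation-of-constants formula
with inhomogeneity `Q - X G X`; the substitution `t = tₙ + s h` rescales the integrals to `[0, 1]`.
-/

open MeasureTheory intervalIntegral Matrix Set

attribute [local instance] Matrix.normedAddCommGroup Matrix.normedSpace

variable {m n p : Type*}

theorem ContinuousOn.matrix_mul [Fintype n] {X : Type*} [TopologicalSpace X] {s : Set X}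
    {R : Type*} [TopologicalSpace R] [NonUnitalNonAssocSemiring R] [IsTopologicalSemiring R]
    {f : X → Matrix m n R} {g : X → Matrix n p R}
    (hf : ContinuousOn f s) (hg : ContinuousOn g s) : ContinuousOn (fun x => f x * g x) s :=
  (continuous_fst.matrix_mul continuous_snd).comp_continuousOn (hf.prodMk hg)

theorem HasDerivAt.matrix_mul [Fintype m] [Fintype n] [Fintype p]
    {𝕜 : Type*} [NontriviallyNormedField 𝕜]
    {f : 𝕜 → Matrix m n 𝕜} {g : 𝕜 → Matrix n p 𝕜} {f' : Matrix m n 𝕜} {g' : Matrix n p 𝕜}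
    {x : 𝕜} (hf : HasDerivAt f f' x) (hg : HasDerivAt g g' x) :
    HasDerivAt (fun t => f t * g t) (f' * g x + f x * g') x := by
  have hf_apply i j : HasDerivAt (fun t => f t i j) (f' i j) x :=
    hasDerivAt_pi.1 (hasDerivAt_pi.1 hf i) j
  have hg_apply i j : HasDerivAt (fun t => g t i j) (g' i j) x :=
    hasDerivAt_pi.1 (hasDerivAt_pi.1 hg i) j
  refine hasDerivAt_pi.2 fun i => hasDerivAt_pi.2 fun j => ?_
  simp only [Matrix.mul_apply, Matrix.add_apply, ← Finset.sum_add_distrib]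
  exact HasDerivAt.fun_sum fun k _ => (hf_apply i k).mul (hg_apply k j)

section Exp

variable [Fintype m] [Fintype n]

/-- `IntervalIntegrable` asks for this at `Matrix.topologicalSpace`, which is not reducibly the
topology of `Matrix.normedAddCommGroup`; both are the sup norm on `m → n → ℝ`. -/
instance Matrix.instENormedAddMonoidReal : ENormedAddMonoid (Matrix m n ℝ) :=
  inferInstanceAs (ENormedAddMonoid (m → n → ℝ))

variable [DecidableEq m] [DecidableEq n]

theorem Matrix.hasDerivAt_exp_smul_const (A : Matrix m m ℝ) (t : ℝ) :
    HasDerivAt (fun u : ℝ => NormedSpace.exp (u • A)) (NormedSpace.exp (t • A) * A) t :=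
  open scoped Norms.Operator in _root_.hasDerivAt_exp_smul_const A t

theorem Matrix.hasDerivAt_exp_smul_const' (A : Matrix m m ℝ) (t : ℝ) :
    HasDerivAt (fun u : ℝ => NormedSpace.exp (u • A)) (A * NormedSpace.exp (t • A)) t :=
  open scoped Norms.Operator in _root_.hasDerivAt_exp_smul_const' A t

theorem Matrix.continuous_exp_smul_const (A : Matrix m m ℝ) :
    Continuous fun u : ℝ => NormedSpace.exp (u • A) :=
  continuous_iff_continuousAt.2 fun t => (hasDerivAt_exp_smul_const A t).continuousAt

variable {A : Matrix m m ℝ} {D : Matrix n n ℝ} {f g : ℝ → Matrix m n ℝ} {a b : ℝ}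

theorem intervalIntegrable_exp_mul_mul_exp (hab : a ≤ b) (hg : ContinuousOn g (Icc a b)) :
    IntervalIntegrable
      (fun t => NormedSpace.exp ((b - t) • A) * g t * NormedSpace.exp ((b - t) • D))
      volume a b := by
  have hE := (continuous_exp_smul_const A).comp (continuous_sub_left b)
  have hF := (continuous_exp_smul_const D).comp (continuous_sub_left b)
  exact ((hE.continuousOn.matrix_mul hg).matrix_mul hF.continuousOn).intervalIntegrable_of_Icc hab

theorem eq_exp_mul_mul_exp_add_integral (hab : a ≤ b)
    (hf : ∀ t ∈ Icc a b, HasDerivAt f (A * f t + f t * D + g t) t)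
    (hg : ContinuousOn g (Icc a b)) :
    f b = NormedSpace.exp ((b - a) • A) * f a * NormedSpace.exp ((b - a) • D) +
      ∫ t in a..b, NormedSpace.exp ((b - t) • A) * g t * NormedSpace.exp ((b - t) • D) := by
  have hsub (t : ℝ) : HasDerivAt (fun t => b - t) (-1) t := by
    simpa using (hasDerivAt_id t).const_sub b
  have hE (t : ℝ) : HasDerivAt (fun t => NormedSpace.exp ((b - t) • A))
      ((-1 : ℝ) • (NormedSpace.exp ((b - t) • A) * A)) t :=
    (hasDerivAt_exp_smul_const A (b - t)).scomp t (hsub t)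
  have hF (t : ℝ) : HasDerivAt (fun t => NormedSpace.exp ((b - t) • D))
      ((-1 : ℝ) • (D * NormedSpace.exp ((b - t) • D))) t :=
    (hasDerivAt_exp_smul_const' D (b - t)).scomp t (hsub t)
  have hY : ∀ t ∈ uIcc a b, HasDerivAt
      (fun t => NormedSpace.exp ((b - t) • A) * f t * NormedSpace.exp ((b - t) • D))
      (NormedSpace.exp ((b - t) • A) * g t * NormedSpace.exp ((b - t) • D)) t := by
    intro t ht
    rw [uIcc_of_le hab] at ht
    convert ((hE t).matrix_mul (hf t ht)).matrix_mul (hF t) using 1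
    simp only [Matrix.mul_add, Matrix.add_mul, neg_smul, one_smul, Matrix.neg_mul,
      Matrix.mul_neg, Matrix.mul_assoc]
    abel
  rw [integral_eq_sub_of_hasDerivAt hY (intervalIntegrable_exp_mul_mul_exp hab hg)]
  simp only [sub_self, zero_smul, NormedSpace.exp_zero, Matrix.one_mul, Matrix.mul_one]
  abel

end Exp

theorem intervalIntegral.integral_eq_smul_integral_comp_unitInterval {E : Type*}
    [NormedAddCommGroup E] [NormedSpace ℝ E] (f : ℝ → E) (a h : ℝ) :
    ∫ t in a..a + h, f t = h • ∫ s in (0 : ℝ)..1, f (a + s * h) := by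
  simp_rw [mul_comm _ h]
  rw [smul_integral_comp_add_mul, mul_zero, mul_one, add_zero]

/-- A solution of the matrix Riccati differential equation satisfies,
for every `tₙ ≥ 0` and step size `h > 0`,
`X(tₙ+h) = e^{hA}·X(tₙ)·e^{hD} + h·∫₀¹ e^{(1−s)hA}·Q·e^{(1−s)hD} ds
         − h·∫₀¹ e^{(1−s)hA}·X(tₙ+sh)·G·X(tₙ+sh)·e^{(1−s)hD} ds`. -/
theorem mrde_step_integral_form (M N : ℕ)
    (A : Matrix (Fin M) (Fin M) ℝ) (D : Matrix (Fin N) (Fin N) ℝ)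
    (Q : Matrix (Fin M) (Fin N) ℝ) (G : Matrix (Fin N) (Fin M) ℝ)
    (X : ℝ → Matrix (Fin M) (Fin N) ℝ)
    (hX : ∀ t, 0 ≤ t → HasDerivAt X (A * X t + X t * D + Q - X t * G * X t) t) :
    ∀ tn, 0 ≤ tn → ∀ h : ℝ, 0 < h →
      X (tn + h) = NormedSpace.exp (h • A) * X tn * NormedSpace.exp (h • D) +
        h • (∫ s in (0:ℝ)..1,
          NormedSpace.exp (((1 - s) * h) • A) * Q *
            NormedSpace.exp (((1 - s) * h) • D)) -
        h • ∫ s in (0:ℝ)..1,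
          NormedSpace.exp (((1 - s) * h) • A) *
            (X (tn + s * h) * G * X (tn + s * h)) *
              NormedSpace.exp (((1 - s) * h) • D) := by
  intro tn htn h hh
  have hXd : ∀ t ∈ Icc tn (tn + h), HasDerivAt X (A * X t + X t * D + (Q - X t * G * X t)) t :=
    fun t ht => add_sub_assoc (A * X t + X t * D) Q _ ▸ hX t (htn.trans ht.1)
  have hXc : ContinuousOn X (Icc tn (tn + h)) :=
    fun t ht => (hXd t ht).continuousAt.continuousWithinAt
  have hXGX : ContinuousOn (fun t => X t * G * X t) (Icc tn (tn + h)) :=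
    (hXc.matrix_mul continuousOn_const).matrix_mul hXc
  have hab : tn ≤ tn + h := by linarith
  rw [eq_exp_mul_mul_exp_add_integral hab hXd (continuousOn_const.sub hXGX)]
  simp only [Matrix.mul_sub, Matrix.sub_mul]
  rw [integral_sub (intervalIntegrable_exp_mul_mul_exp hab continuousOn_const)
      (intervalIntegrable_exp_mul_mul_exp hab hXGX),
    integral_eq_smul_integral_comp_unitInterval, integral_eq_smul_integral_comp_unitInterval,
    add_sub_cancel_left]
  simp only [show ∀ s, tn + h - (tn + s * h) = (1 - s) * h from fun s => by ring,
    add_sub_assoc]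
end

section
/- Let A ∈ ℝ^{M×M}, D ∈ ℝ^{N×N}, let m ≥ 1, and let N_0, N_1, …, N_m ∈ ℝ^{M×N}. If X : ℝ → ℝ^{M×N} is differentiable and satisfies X'(t) = A·X(t) + X(t)·D + Σ_{j=1}^{m} (t^{j−1}/(j−1)!)·N_j for all t, with X(0) = N_0, then for every t ≥ 0, X(t) = e^{tS}(N_0) + Σ_{j=1}^{m} t^{j}·φ_j(tS)(N_j). -/
open MeasureTheory intervalIntegral Matrix Finset

attribute [local instance] Matrix.normedAddCommGroup Matrix.normedSpace

/-- The `φ`-functions of a continuous linear endomorphism `L`: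
`φ₀(L) = e^{L}` and `φⱼ(L) = ∫₀¹ e^{(1−θ)L}·θ^{j−1}/(j−1)! dθ` for `j ≥ 1`. -/
noncomputable def phi {V : Type*} [NormedAddCommGroup V] [NormedSpace ℝ V]
    (j : ℕ) (L : V →L[ℝ] V) : V →L[ℝ] V :=
  if j = 0 then NormedSpace.exp L
  else ∫ θ in (0:ℝ)..1,
    (θ ^ (j - 1) / (Nat.factorial (j - 1) : ℝ)) • NormedSpace.exp ((1 - θ) • L)

/-!
Variation of constants: for `X' = S X + f`, the function `s ↦ e^{(t−s)S} X(s)` has derivative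
`e^{(t−s)S} f(s)`, so `X(t) = e^{tS} X(0) + ∫₀ᵗ e^{(t−s)S} f(s) ds`. For the monomial forcing
`f(s) = s^{j−1}/(j−1)! · Nⱼ`, the substitution `s = tθ` turns the `j`-th integral into
`tʲ φⱼ(tS) Nⱼ`.
-/

open NormedSpace

section ExpSubSmul

variable {𝕂 𝔸 : Type*} [RCLike 𝕂] [NormedRing 𝔸] [NormedAlgebra 𝕂 𝔸] [CompleteSpace 𝔸]

theorem hasDerivAt_exp_sub_smul (S : 𝔸) (t s : 𝕂) :
    HasDerivAt (fun u : 𝕂 => exp ((t - u) • S)) (-(exp ((t - s) • S) * S)) s := by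
  simpa [neg_smul, Function.comp_def] using
    (hasDerivAt_exp_smul_const S (t - s)).scomp s ((hasDerivAt_id s).const_sub t)

theorem continuous_exp_sub_smul (S : 𝔸) (t : 𝕂) :
    Continuous fun u : 𝕂 => exp ((t - u) • S) :=
  continuous_iff_continuousAt.2 fun s => (hasDerivAt_exp_sub_smul S t s).continuousAt

end ExpSubSmul

section VariationOfConstants

variable {E : Type*} [NormedAddCommGroup E] [NormedSpace ℝ E] [CompleteSpace E]

theorem eq_exp_smul_apply_add_integral_of_hasDerivAt {S : E →L[ℝ] E} {f X : ℝ → E} {t : ℝ}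
    (hf : ContinuousOn f (Set.uIcc 0 t)) (hX : ∀ s ∈ Set.uIcc 0 t, HasDerivAt X (S (X s) + f s) s) :
    X t = exp (t • S) (X 0) + ∫ s in (0:ℝ)..t, exp ((t - s) • S) (f s) := by
  have hderiv : ∀ s ∈ Set.uIcc 0 t, HasDerivAt (fun u => exp ((t - u) • S) (X u))
      (exp ((t - s) • S) (f s)) s := fun s hs => by
    simpa [mul_apply_eq_comp] using
      (hasDerivAt_exp_sub_smul S t s).clm_apply (hX s hs)
  have hint : IntervalIntegrable (fun s => exp ((t - s) • S) (f s)) volume 0 t :=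
    ((continuous_exp_sub_smul S t).continuousOn.clm_apply hf).intervalIntegrable
  rw [integral_eq_sub_of_hasDerivAt hderiv hint]
  simp

theorem phi_apply_of_ne_zero {j : ℕ} (hj : j ≠ 0) (L : E →L[ℝ] E) (v : E) :
    phi j L v = ∫ θ in (0:ℝ)..1,
      (θ ^ (j - 1) / (Nat.factorial (j - 1) : ℝ)) • exp ((1 - θ) • L) v := by
  have hint : IntervalIntegrable
      (fun θ : ℝ => (θ ^ (j - 1) / (Nat.factorial (j - 1) : ℝ)) • exp ((1 - θ) • L))
      volume 0 1 :=
    (((continuous_pow _).div_const _).smul (continuous_exp_sub_smul L 1)).intervalIntegrable 0 1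
  rw [phi, if_neg hj, ContinuousLinearMap.intervalIntegral_apply hint]
  simp only [_root_.smul_apply]

theorem pow_smul_phi_apply_eq_integral {j : ℕ} (hj : j ≠ 0) (S : E →L[ℝ] E) (v : E) (t : ℝ) :
    t ^ j • phi j (t • S) v = ∫ s in (0:ℝ)..t,
      (s ^ (j - 1) / (Nat.factorial (j - 1) : ℝ)) • exp ((t - s) • S) v := by
  have hsub := smul_integral_comp_mul_left
    (fun s : ℝ => (s ^ (j - 1) / (Nat.factorial (j - 1) : ℝ)) • exp ((t - s) • S) v)
    (a := 0) (b := 1) t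
  rw [mul_zero, mul_one] at hsub
  obtain ⟨k, rfl⟩ := Nat.exists_eq_succ_of_ne_zero hj
  rw [← hsub, phi_apply_of_ne_zero hj, pow_succ', ← smul_smul, ← intervalIntegral.integral_smul]
  congr 2 with θ
  rw [Nat.succ_sub_one, show (t - t * θ) • S = (1 - θ) • t • S by rw [smul_smul]; ring_nf,
    mul_pow, smul_smul, smul_smul, mul_div_assoc]

theorem eq_exp_smul_apply_add_sum_pow_smul_phi_of_hasDerivAt {S : E →L[ℝ] E} {X : ℝ → E}
    {m : ℕ} {v : ℕ → E} {t : ℝ}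
    (hX : ∀ s ∈ Set.uIcc 0 t, HasDerivAt X (S (X s) +
      ∑ j ∈ Finset.Icc 1 m, (s ^ (j - 1) / (Nat.factorial (j - 1) : ℝ)) • v j) s) :
    X t = exp (t • S) (X 0) + ∑ j ∈ Finset.Icc 1 m, t ^ j • phi j (t • S) (v j) := by
  have hforcing : ∀ j, Continuous fun s : ℝ =>
      (s ^ (j - 1) / (Nat.factorial (j - 1) : ℝ)) • v j :=
    fun j => ((continuous_pow _).div_const _).smul continuous_const
  rw [eq_exp_smul_apply_add_integral_of_hasDerivAt
    (continuous_finsetSum _ fun j _ => hforcing j).continuousOn hX]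
  congr 1
  simp only [map_sum, map_smul]
  refine (intervalIntegral.integral_finsetSum fun j _ => ?_).trans
    (Finset.sum_congr rfl fun j hj => ?_)
  · exact (((continuous_pow _).div_const _).smul
      ((continuous_exp_sub_smul S t).clm_apply continuous_const)).intervalIntegrable 0 t
  · exact (pow_smul_phi_apply_eq_integral (by grind) S (v j) t).symm

end VariationOfConstants

theorem msde_polynomial_inhomogeneity_general (M N : ℕ)
    (A : Matrix (Fin M) (Fin M) ℝ) (D : Matrix (Fin N) (Fin N) ℝ)
    (m : ℕ)
    (Nmat : ℕ → Matrix (Fin M) (Fin N) ℝ)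
    (S : Matrix (Fin M) (Fin N) ℝ →L[ℝ] Matrix (Fin M) (Fin N) ℝ)
    (hS : ∀ X, S X = A * X + X * D)
    (X : ℝ → Matrix (Fin M) (Fin N) ℝ)
    (hX : ∀ t, HasDerivAt X
      (A * X t + X t * D +
        ∑ j ∈ Finset.Icc 1 m, (t ^ (j - 1) / (Nat.factorial (j - 1) : ℝ)) • Nmat j) t)
    (hX0 : X 0 = Nmat 0) :
    ∀ t : ℝ, 0 ≤ t →
      X t = @NormedSpace.exp _ _ _ (@NonUnitalSeminormedRing.toIsTopologicalRing _
        ContinuousLinearMap.toNormedRing.toNonUnitalNormedRing.toNonUnitalSeminormedRing) (t • S) (Nmat 0) +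
        ∑ j ∈ Finset.Icc 1 m, t ^ j • phi j (t • S) (Nmat j) := by
  intro t _
  have hX' : ∀ s ∈ Set.uIcc 0 t, HasDerivAt X (S (X s) +
      ∑ j ∈ Finset.Icc 1 m, (s ^ (j - 1) / (Nat.factorial (j - 1) : ℝ)) • Nmat j) s :=
    fun s _ => by rw [hS]; exact hX s
  rw [← hX0]
  exact eq_exp_smul_apply_add_sum_pow_smul_phi_of_hasDerivAt hX'

/-- If `X' = A·X + X·D + Σ_{j=1}^{m} (t^{j−1}/(j−1)!)·Nⱼ` with
`X(0) = N₀`, then `X(t) = e^{tS}(N₀) + Σ_{j=1}^{m} tʲ·φⱼ(tS)(Nⱼ)`, where `S` is the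
Sylvester operator `S(X) = A·X + X·D`. -/
theorem msde_polynomial_inhomogeneity (M N : ℕ)
    (A : Matrix (Fin M) (Fin M) ℝ) (D : Matrix (Fin N) (Fin N) ℝ)
    (m : ℕ) (hm : 1 ≤ m)
    (Nmat : ℕ → Matrix (Fin M) (Fin N) ℝ)
    (S : Matrix (Fin M) (Fin N) ℝ →L[ℝ] Matrix (Fin M) (Fin N) ℝ)
    (hS : ∀ X, S X = A * X + X * D)
    (X : ℝ → Matrix (Fin M) (Fin N) ℝ)
    (hX : ∀ t, HasDerivAt X
      (A * X t + X t * D +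
        ∑ j ∈ Finset.Icc 1 m, (t ^ (j - 1) / (Nat.factorial (j - 1) : ℝ)) • Nmat j) t)
    (hX0 : X 0 = Nmat 0) :
    ∀ t : ℝ, 0 ≤ t →
      X t = @NormedSpace.exp _ _ _ (@NonUnitalSeminormedRing.toIsTopologicalRing _
        ContinuousLinearMap.toNormedRing.toNonUnitalNormedRing.toNonUnitalSeminormedRing) (t • S) (Nmat 0) +
        ∑ j ∈ Finset.Icc 1 m, t ^ j • phi j (t • S) (Nmat j) :=
  msde_polynomial_inhomogeneity_general M N A D m Nmat S hS X hX hX0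
end

section
/- Let A ∈ ℝ^{M×M}, D ∈ ℝ^{N×N}, and G ∈ ℝ^{M×N}, and let 𝔸 ∈ ℝ^{(M+N)×(M+N)} be the block matrix with blocks [[A, G], [0, −D]]. Then the matrix exponential of 𝔸 is the block matrix e^{𝔸} = [[e^{A}, ∫_0^1 e^{(1−s)A}·G·e^{−sD} ds], [0, e^{−D}]]. -/
/-!
Duhamel's formula `e^b - e^a = ∫₀¹ e^{(1-s)a} (b - a) e^{sb} ds`, applied with
`a = diag(A, -D)` and `b = 𝔸`, reduces the claim to a block computation. The difference
`b - a = [[0, G], [0, 0]]` only meets the second block row of `e^{s𝔸}`, and that row is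
`(0, e^{-sD})` because the projection `[[0, 0], [0, 1]]` intertwines `𝔸` with `diag(0, -D)`.
-/

open MeasureTheory intervalIntegral Matrix NormedSpace

attribute [local instance] Matrix.normedAddCommGroup Matrix.normedSpace

theorem hasDerivAt_exp_smul_mul_exp_smul {𝕂 R : Type*} [RCLike 𝕂] [NormedRing R]
    [NormedAlgebra 𝕂 R] [CompleteSpace R] (a b : R) (t : 𝕂) :
    HasDerivAt (fun s : 𝕂 => exp ((1 - s) • a) * exp (s • b))
      (exp ((1 - t) • a) * (b - a) * exp (t • b)) t := by
  have ha : HasDerivAt (fun s : 𝕂 => exp ((1 - s) • a)) (-(exp ((1 - t) • a) * a)) t := by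
    simpa [Function.comp_def] using
      (hasDerivAt_exp_smul_const a (1 - t)).scomp t ((hasDerivAt_id t).const_sub 1)
  convert ha.fun_mul (hasDerivAt_exp_smul_const' b t) using 1
  simp only [mul_sub, sub_mul, neg_mul, mul_assoc]
  abel

namespace Matrix

variable {m n : Type*} [Fintype m] [DecidableEq m] [Fintype n] [DecidableEq n]

/- The statements below only involve the topology of matrices, which the operator norm
(`Norms.Operator`) induces as well; in that Banach-algebra structure the general facts about
`exp` apply verbatim. -/

@[fun_prop]
theorem continuous_exp : Continuous (exp : Matrix n n ℝ → Matrix n n ℝ) :=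
  open scoped Norms.Operator in exp_continuous

theorem exp_sub_exp_eq_integral (a b : Matrix n n ℝ) :
    exp b - exp a = ∫ s in (0 : ℝ)..1, exp ((1 - s) • a) * (b - a) * exp (s • b) := by
  have hderiv : ∀ s : ℝ, HasDerivAt (fun s : ℝ => exp ((1 - s) • a) * exp (s • b))
      (exp ((1 - s) • a) * (b - a) * exp (s • b)) s :=
    open scoped Norms.Operator in hasDerivAt_exp_smul_mul_exp_smul a b
  have hcont : Continuous fun s : ℝ => exp ((1 - s) • a) * (b - a) * exp (s • b) := by fun_prop
  rw [integral_eq_sub_of_hasDerivAt (fun s _ => hderiv s) (hcont.intervalIntegrable 0 1)]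
  simp

theorem exp_fromBlocks_zero₁₂_zero₂₁ (A : Matrix m m ℝ) (D : Matrix n n ℝ) :
    exp (fromBlocks A 0 0 D) = fromBlocks (exp A) 0 0 (exp D) := by
  let f : Matrix m m ℝ × Matrix n n ℝ →+* Matrix (m ⊕ n) (m ⊕ n) ℝ :=
    { toFun := fun p => fromBlocks p.1 0 0 p.2
      map_one' := fromBlocks_one
      map_mul' := fun p q => by simp [fromBlocks_multiply]
      map_zero' := fromBlocks_zero
      map_add' := fun p q => by simp [fromBlocks_add] }
  have hf : Continuous f :=
    continuous_fst.matrix_fromBlocks continuous_const continuous_const continuous_snd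
  have hmap : f (exp (A, D)) = exp (f (A, D)) := open scoped Norms.Operator in map_exp f hf _
  have hfst : (exp (A, D)).1 = exp A := open scoped Norms.Operator in Prod.fst_exp _
  have hsnd : (exp (A, D)).2 = exp D := open scoped Norms.Operator in Prod.snd_exp _
  rw [← hfst, ← hsnd]
  exact hmap.symm

theorem fromBlocks_zero_one_mul_exp_fromBlocks_zero₂₁ (A : Matrix m m ℝ) (B : Matrix m n ℝ)
    (D : Matrix n n ℝ) :
    fromBlocks 0 0 0 1 * exp (fromBlocks A B 0 D) = fromBlocks 0 0 0 (exp D) := by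
  have h : SemiconjBy (fromBlocks 0 0 0 1) (fromBlocks A B 0 D) (fromBlocks 0 0 0 D) := by
    simp [SemiconjBy, fromBlocks_multiply]
  have hexp : fromBlocks 0 0 0 1 * exp (fromBlocks A B 0 D) =
      exp (fromBlocks 0 0 0 D) * fromBlocks 0 0 0 1 :=
    open scoped Norms.Operator in h.exp_right
  rw [hexp, exp_fromBlocks_zero₁₂_zero₂₁, exp_zero]
  simp [fromBlocks_multiply]

theorem intervalIntegral_fromBlocks_zero {l o p q : Type*} [Fintype l] [Fintype o] [Fintype p]
    [Fintype q] {f : ℝ → Matrix l q ℝ} (hf : Continuous f) (a b : ℝ) :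
    ∫ s in a..b, fromBlocks (0 : Matrix l p ℝ) (f s) (0 : Matrix o p ℝ) (0 : Matrix o q ℝ) =
      fromBlocks 0 (∫ s in a..b, f s) 0 0 := by
  let L : Matrix l q ℝ →L[ℝ] Matrix (l ⊕ o) (p ⊕ q) ℝ := LinearMap.toContinuousLinearMap
    { toFun := fun X => fromBlocks 0 X 0 0
      map_add' := fun X Y => by simp [fromBlocks_add]
      map_smul' := fun c X => by simp [fromBlocks_smul] }
  exact L.intervalIntegral_comp_comm (hf.intervalIntegrable a b)

end Matrix

/-- For the block upper-triangular matrix `𝔸 = [[A, G], [0, −D]]`,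
`e^{𝔸} = [[e^{A}, ∫₀¹ e^{(1−s)A}·G·e^{−sD} ds], [0, e^{−D}]]`. -/
theorem block_matrix_exp (M N : ℕ)
    (A : Matrix (Fin M) (Fin M) ℝ) (D : Matrix (Fin N) (Fin N) ℝ)
    (G : Matrix (Fin M) (Fin N) ℝ) :
    NormedSpace.exp (Matrix.fromBlocks A G 0 (-D)) =
      Matrix.fromBlocks (NormedSpace.exp A)
        (∫ s in (0:ℝ)..1,
          NormedSpace.exp ((1 - s) • A) * G * NormedSpace.exp ((-s) • D))
        0 (NormedSpace.exp (-D)) := by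
  set 𝔸 := fromBlocks A G 0 (-D)
  set 𝔻 := fromBlocks A 0 0 (-D)
  have hdiff : 𝔸 - 𝔻 = fromBlocks 0 G 0 0 * fromBlocks 0 0 0 1 := by
    simp [𝔸, 𝔻, sub_eq_add_neg, fromBlocks_neg, fromBlocks_add, fromBlocks_multiply]
  have hintegrand : ∀ s : ℝ, exp ((1 - s) • 𝔻) * (𝔸 - 𝔻) * exp (s • 𝔸) =
      fromBlocks 0 (exp ((1 - s) • A) * G * exp ((-s) • D)) 0 0 := by
    intro s
    simp only [hdiff, 𝔸, 𝔻, fromBlocks_smul, smul_zero, mul_assoc,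
      fromBlocks_zero_one_mul_exp_fromBlocks_zero₂₁, exp_fromBlocks_zero₁₂_zero₂₁]
    simp [fromBlocks_multiply, Matrix.mul_assoc]
  rw [← sub_add_cancel (exp 𝔸) (exp 𝔻), exp_sub_exp_eq_integral,
    integral_congr fun s _ => hintegrand s,
    intervalIntegral_fromBlocks_zero (by fun_prop), exp_fromBlocks_zero₁₂_zero₂₁, fromBlocks_add]
  simp
end

section
/- Let A ∈ ℝ^{M×M}, D ∈ ℝ^{N×N}, G ∈ ℝ^{M×N}, X ∈ ℝ^{M×N}, and h > 0. Let S be the Sylvester operator S(Y) = A·Y + Y·D on ℝ^{M×N}, and let 𝔸 ∈ ℝ^{(M+N)×(M+N)} be the block matrix [[A, G], [0, −D]]. Then e^{hS}(X) + h·φ_1(hS)(G) = ( [I_M, 0] · e^{h𝔸} · [X; I_N] ) · e^{hD}, where [I_M, 0] ∈ ℝ^{M×(M+N)} and [X; I_N] ∈ ℝ^{(M+N)×N} is the block column matrix with blocks X and I_N. -/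
open MeasureTheory intervalIntegral Matrix

attribute [local instance] Matrix.normedAddCommGroup Matrix.normedSpace

/-!
On `(M+N)×N` matrices the Sylvester operator `𝒯 Z = 𝔸 Z + Z D` is block triangular with respect to
`Z ↦ ([I, 0] Z, [0, I] Z)`: the top block evolves by `S` forced by `G` times the bottom block, and
the bottom block evolves by `W ↦ -D W + W D`, which fixes `W = I`. So the top block of
`e^{h𝒯} [X; I] = e^{h𝔸} [X; I] e^{hD}` solves `Y' = S Y + G`, `Y(0) = X`, and variation of
constants (differentiate `e^{-tS} Y(t)`) identifies it with `e^{hS} X + h φ₁(hS) G`.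
-/

open NormedSpace

-- `exp_add_of_commute` needs a normed `ℚ`-algebra, which Mathlib does not put on operator algebras.
noncomputable local instance {E : Type*} [NormedAddCommGroup E] [NormedSpace ℝ E] :
    NormedAlgebra ℚ (E →L[ℝ] E) :=
  NormedAlgebra.restrictScalars ℚ ℝ _

section OperatorExponential

variable {E : Type*} [NormedAddCommGroup E] [NormedSpace ℝ E] [CompleteSpace E]

theorem exp_smul_mul_exp_smul (T : E →L[ℝ] E) (s t : ℝ) :
    exp (s • T) * exp (t • T) = exp ((s + t) • T) := by
  rw [add_smul, exp_add_of_commute (((Commute.refl T).smul_left s).smul_right t)]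

theorem hasDerivAt_exp_smul_apply (T : E →L[ℝ] E) (x : E) (t : ℝ) :
    HasDerivAt (fun u : ℝ => exp (u • T) x) (T (exp (t • T) x)) t := by
  simpa using (hasDerivAt_exp_smul_const' T t).clm_apply (hasDerivAt_const t x)

theorem hasDerivAt_apply_exp_smul_apply {F : Type*} [NormedAddCommGroup F] [NormedSpace ℝ F]
    (π : E →L[ℝ] F) (T : E →L[ℝ] E) (x : E) (t : ℝ) :
    HasDerivAt (fun u : ℝ => π (exp (u • T) x)) (π (T (exp (t • T) x))) t :=
  π.hasFDerivAt.comp_hasDerivAt t (hasDerivAt_exp_smul_apply T x t)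

theorem continuous_exp_smul_apply (T : E →L[ℝ] E) (x : E) :
    Continuous fun s : ℝ => exp (s • T) x :=
  continuous_iff_continuousAt.2 fun t => (hasDerivAt_exp_smul_apply T x t).continuousAt

theorem hasSum_exp_apply (T : E →L[ℝ] E) (x : E) :
    HasSum (fun k => (k.factorial : ℝ)⁻¹ • (T ^ k) x) (exp T x) :=
  (exp_series_hasSum_exp' (𝕂 := ℝ) T).mapL (ContinuousLinearMap.apply ℝ E x)

theorem smul_phi_one_smul_apply (T : E →L[ℝ] E) (h : ℝ) (b : E) :
    h • phi 1 (h • T) b = ∫ s in (0 : ℝ)..h, exp ((h - s) • T) b := by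
  have hint : Continuous fun θ : ℝ => exp ((1 - θ) • h • T) :=
    exp_continuous.comp ((continuous_const.sub continuous_id).smul continuous_const)
  have hphi : phi 1 (h • T) = ∫ θ in (0 : ℝ)..1, exp ((1 - θ) • h • T) := by simp [phi]
  rw [hphi, ContinuousLinearMap.intervalIntegral_apply (hint.intervalIntegrable 0 1)]
  simpa [smul_smul, mul_sub, mul_comm] using
    smul_integral_comp_mul_left (fun s => exp ((h - s) • T) b) (a := 0) (b := 1) h

theorem eq_exp_smul_apply_add_smul_phi_one_of_hasDerivAt {T : E →L[ℝ] E} {b : E} {f : ℝ → E}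
    (hf : ∀ t, HasDerivAt f (T (f t) + b) t) (h : ℝ) :
    f h = exp (h • T) (f 0) + h • phi 1 (h • T) b := by
  have hw : ∀ t, HasDerivAt (fun t => exp (t • -T) (f t)) (exp (t • -T) b) t := by
    intro t
    have hcomm : exp (t • -T) (T (f t)) = T (exp (t • -T) (f t)) := by
      rw [← mul_apply_eq_comp, ← mul_apply_eq_comp,
        ((Commute.refl T).neg_right.smul_right t).exp_right.eq]
    convert (hasDerivAt_exp_smul_const' (-T) t).clm_apply (hf t) using 1
    rw [mul_apply_eq_comp, map_add, hcomm]
    simp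
  have hshift : ∀ s, exp (h • T) (exp (s • -T) b) = exp ((h - s) • T) b := fun s => by
    rw [smul_neg, ← neg_smul, ← mul_apply_eq_comp, exp_smul_mul_exp_smul, sub_eq_add_neg]
  have hftc := integral_eq_sub_of_hasDerivAt (fun t _ => hw t)
      ((continuous_exp_smul_apply (-T) b).intervalIntegrable 0 h)
  calc f h = exp (h • T) (exp (h • -T) (f h)) := by
        rw [smul_neg, ← neg_smul, ← mul_apply_eq_comp, exp_smul_mul_exp_smul]
        simp
    _ = exp (h • T) (f 0) + ∫ s in (0 : ℝ)..h, exp ((h - s) • T) b := by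
      rw [eq_add_of_sub_eq' hftc.symm, map_add, ← ContinuousLinearMap.intervalIntegral_comp_comm _
        ((continuous_exp_smul_apply (-T) b).intervalIntegrable 0 h)]
      simp only [zero_smul, exp_zero, one_apply_eq_self, hshift]
    _ = exp (h • T) (f 0) + h • phi 1 (h • T) b := by rw [smul_phi_one_smul_apply]

end OperatorExponential

section BlockTriangular

variable {E F W : Type*} [NormedAddCommGroup E] [NormedSpace ℝ E] [CompleteSpace E]
  [NormedAddCommGroup F] [NormedSpace ℝ F] [CompleteSpace F]
  [NormedAddCommGroup W] [NormedSpace ℝ W] [CompleteSpace W]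

theorem eq_exp_smul_apply_of_hasDerivAt {T : E →L[ℝ] E} {f : ℝ → E}
    (hf : ∀ t, HasDerivAt f (T (f t)) t) (t : ℝ) : f t = exp (t • T) (f 0) := by
  simpa using eq_exp_smul_apply_add_smul_phi_one_of_hasDerivAt (b := (0 : E))
    (fun t => by simpa using hf t) t

theorem exp_smul_apply_eq_self_of_apply_eq_zero {U : W →L[ℝ] W} {w : W} (hw : U w = 0) (t : ℝ) :
    exp (t • U) w = w :=
  (eq_exp_smul_apply_of_hasDerivAt (f := fun _ => w)
    (fun t => by simpa [hw] using hasDerivAt_const t w) t).symm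

theorem apply_exp_smul_apply_of_comp_eq {T : F →L[ℝ] F} {U : W →L[ℝ] W} {ρ : F →L[ℝ] W}
    (hρ : ∀ z, ρ (T z) = U (ρ z)) (z : F) (t : ℝ) :
    ρ (exp (t • T) z) = exp (t • U) (ρ z) := by
  simpa using eq_exp_smul_apply_of_hasDerivAt
    (fun t => (hasDerivAt_apply_exp_smul_apply ρ T z t).congr_deriv (hρ _)) t

theorem apply_exp_smul_apply_of_triangular {T : F →L[ℝ] F} {S : E →L[ℝ] E} {U : W →L[ℝ] W}
    {π : F →L[ℝ] E} {ρ : F →L[ℝ] W} {g : W →L[ℝ] E}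
    (hπ : ∀ z, π (T z) = S (π z) + g (ρ z)) (hρ : ∀ z, ρ (T z) = U (ρ z))
    {q : F} (hq : U (ρ q) = 0) (h : ℝ) :
    π (exp (h • T) q) = exp (h • S) (π q) + h • phi 1 (h • S) (g (ρ q)) := by
  have hρq : ∀ t, ρ (exp (t • T) q) = ρ q := fun t => by
    rw [apply_exp_smul_apply_of_comp_eq hρ, exp_smul_apply_eq_self_of_apply_eq_zero hq]
  simpa using eq_exp_smul_apply_add_smul_phi_one_of_hasDerivAt
    (fun t => (hasDerivAt_apply_exp_smul_apply π T q t).congr_deriv (by rw [hπ, hρq])) h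

end BlockTriangular

section SylvesterOperator

/- The normed ring `Matrix m n ℝ →L[ℝ] Matrix m n ℝ` is only found when matrices carry the topology
of their sup norm, which is not reducibly the default product topology; so here it is their only
topology. The two are definitionally equal, so matrix exponentials taken here are the usual ones. -/
attribute [-instance] instTopologicalSpaceMatrix Matrix.instUniformSpace

local instance {m : Type*} [Fintype m] [DecidableEq m] : IsTopologicalRing (Matrix m m ℝ) :=
  Matrix.topologicalRing

namespace Matrix

variable {l m n : Type*} [Fintype l] [Fintype m] [Fintype n]

noncomputable def mulLeftCLM (n : Type*) [Fintype n] (A : Matrix l m ℝ) :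
    Matrix m n ℝ →L[ℝ] Matrix l n ℝ :=
  (mulLeftLinearMap n ℝ A).toContinuousLinearMap

@[simp]
theorem mulLeftCLM_apply (A : Matrix l m ℝ) (Y : Matrix m n ℝ) : mulLeftCLM n A Y = A * Y := rfl

noncomputable def mulRightCLM (l : Type*) [Fintype l] (B : Matrix m n ℝ) :
    Matrix l m ℝ →L[ℝ] Matrix l n ℝ :=
  (mulRightLinearMap l ℝ B).toContinuousLinearMap

@[simp]
theorem mulRightCLM_apply (B : Matrix m n ℝ) (Y : Matrix l m ℝ) : mulRightCLM l B Y = Y * B :=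
  rfl

noncomputable def sylvesterCLM (A : Matrix m m ℝ) (D : Matrix n n ℝ) :
    Matrix m n ℝ →L[ℝ] Matrix m n ℝ :=
  mulLeftCLM n A + mulRightCLM m D

@[simp]
theorem sylvesterCLM_apply (A : Matrix m m ℝ) (D : Matrix n n ℝ) (Y : Matrix m n ℝ) :
    sylvesterCLM A D Y = A * Y + Y * D := rfl

theorem smul_sylvesterCLM (t : ℝ) (A : Matrix m m ℝ) (D : Matrix n n ℝ) :
    t • sylvesterCLM A D = sylvesterCLM (t • A) (t • D) := by
  ext1 Y
  simp [smul_add]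

theorem mulLeftCLM_pow_apply [DecidableEq m] (A : Matrix m m ℝ) (k : ℕ) (Y : Matrix m n ℝ) :
    (mulLeftCLM n A ^ k) Y = A ^ k * Y := by
  induction k generalizing Y with
  | zero => simp
  | succ k ih => rw [pow_succ, mul_apply_eq_comp, mulLeftCLM_apply, ih, pow_succ, Matrix.mul_assoc]

theorem mulRightCLM_pow_apply [DecidableEq n] (D : Matrix n n ℝ) (k : ℕ) (Y : Matrix m n ℝ) :
    (mulRightCLM m D ^ k) Y = Y * D ^ k := by
  induction k generalizing Y with
  | zero => simp
  | succ k ih =>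
    rw [pow_succ, mul_apply_eq_comp, mulRightCLM_apply, ih, pow_succ', Matrix.mul_assoc]

theorem hasSum_exp [DecidableEq m] (A : Matrix m m ℝ) :
    HasSum (fun k => (k.factorial : ℝ)⁻¹ • A ^ k) (exp A) := by
  have hs := (hasSum_exp_apply (mulLeftCLM m A) 1).summable
  simp only [mulLeftCLM_pow_apply, Matrix.mul_one] at hs
  rw [exp_eq_tsum ℝ]
  exact hs.hasSum

theorem exp_mulLeftCLM_apply [DecidableEq m] (A : Matrix m m ℝ) (Y : Matrix m n ℝ) :
    exp (mulLeftCLM n A) Y = exp A * Y := by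
  refine (hasSum_exp_apply _ Y).unique ?_
  simp only [mulLeftCLM_pow_apply]
  simpa [Matrix.smul_mul] using (hasSum_exp A).mapL (mulRightCLM m Y)

theorem exp_mulRightCLM_apply [DecidableEq n] (D : Matrix n n ℝ) (Y : Matrix m n ℝ) :
    exp (mulRightCLM m D) Y = Y * exp D := by
  refine (hasSum_exp_apply _ Y).unique ?_
  simp only [mulRightCLM_pow_apply]
  simpa [Matrix.mul_smul] using (hasSum_exp D).mapL (mulLeftCLM n Y)

theorem exp_sylvesterCLM_apply [DecidableEq m] [DecidableEq n] (A : Matrix m m ℝ)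
    (D : Matrix n n ℝ) (Y : Matrix m n ℝ) :
    exp (sylvesterCLM A D) Y = exp A * Y * exp D := by
  have hcomm : Commute (mulLeftCLM n A) (mulRightCLM m D) := by
    ext1 Z
    simp [mul_apply_eq_comp, Matrix.mul_assoc]
  rw [sylvesterCLM, NormedSpace.exp_add_of_commute hcomm, mul_apply_eq_comp,
    exp_mulRightCLM_apply, exp_mulLeftCLM_apply, Matrix.mul_assoc]

theorem exp_smul_apply_add_smul_phi_one_eq_fromBlocks [DecidableEq m] [DecidableEq n]
    (A : Matrix m m ℝ) (D : Matrix n n ℝ) (G X : Matrix m n ℝ) (h : ℝ)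
    (S : Matrix m n ℝ →L[ℝ] Matrix m n ℝ) (hS : ∀ Y, S Y = A * Y + Y * D) :
    exp (h • S) X + h • phi 1 (h • S) G =
      fromCols (1 : Matrix m m ℝ) (0 : Matrix m n ℝ) * exp (h • fromBlocks A G 0 (-D)) *
        fromRows X (1 : Matrix n n ℝ) * exp (h • D) := by
  set P : Matrix m (m ⊕ n) ℝ := fromCols 1 0
  set P' : Matrix n (m ⊕ n) ℝ := fromCols 0 1
  set Q : Matrix (m ⊕ n) n ℝ := fromRows X 1
  set B : Matrix (m ⊕ n) (m ⊕ n) ℝ := fromBlocks A G 0 (-D)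
  have hPB : P * B = A * P + G * P' := by
    simp only [P, P', B, fromCols_mul_fromBlocks, mul_fromCols]
    ext i (j | j) <;> simp
  have hP'B : P' * B = -D * P' := by simp [P', B, fromCols_mul_fromBlocks, mul_fromCols]
  have hπ : ∀ Z, P * sylvesterCLM B D Z = S (P * Z) + G * (P' * Z) := fun Z => by
    rw [sylvesterCLM_apply, hS, Matrix.mul_add, ← Matrix.mul_assoc, hPB, Matrix.add_mul]
    simp only [Matrix.mul_assoc]
    abel
  have hρ : ∀ Z, P' * sylvesterCLM B D Z = sylvesterCLM (-D) D (P' * Z) := fun Z => by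
    rw [sylvesterCLM_apply, sylvesterCLM_apply, Matrix.mul_add, ← Matrix.mul_assoc, hP'B,
      Matrix.mul_assoc, Matrix.mul_assoc]
  have hP'Q : P' * Q = 1 := by simp [P', Q, fromCols_mul_fromRows]
  have hPQ : P * Q = X := by simp [P, Q, fromCols_mul_fromRows]
  have key := apply_exp_smul_apply_of_triangular (T := sylvesterCLM B D) (S := S)
    (π := mulLeftCLM n P) (ρ := mulLeftCLM n P') (g := mulLeftCLM n G) hπ hρ
    (q := Q) (by simp [hP'Q]) h
  simp only [mulLeftCLM_apply, hPQ, hP'Q, Matrix.mul_one, smul_sylvesterCLM,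
    exp_sylvesterCLM_apply] at key
  rw [← key]
  simp only [Matrix.mul_assoc]

end Matrix

end SylvesterOperator

/-- With `S` the Sylvester operator `S(Y) = A·Y + Y·D` and
`𝔸 = [[A, G], [0, −D]]`, one has
`e^{hS}(X) + h·φ₁(hS)(G) = ([I_M, 0]·e^{h𝔸}·[X; I_N])·e^{hD}`. -/
theorem exp_euler_step_via_block_matrix (M N : ℕ)
    (A : Matrix (Fin M) (Fin M) ℝ) (D : Matrix (Fin N) (Fin N) ℝ)
    (G X : Matrix (Fin M) (Fin N) ℝ) (h : ℝ)
    (S : Matrix (Fin M) (Fin N) ℝ →L[ℝ] Matrix (Fin M) (Fin N) ℝ)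
    (hS : ∀ Y, S Y = A * Y + Y * D) :
    @NormedSpace.exp _ _ _ (by exact (@NonUnitalSeminormedRing.toIsTopologicalRing _
      (@ContinuousLinearMap.toNormedRing ℝ (Matrix (Fin M) (Fin N) ℝ) _ _
        _).toNonUnitalNormedRing.toNonUnitalSeminormedRing)) (h • S) X + h • phi 1 (h • S) G =
      (Matrix.fromCols (1 : Matrix (Fin M) (Fin M) ℝ) (0 : Matrix (Fin M) (Fin N) ℝ) *
        NormedSpace.exp (h • Matrix.fromBlocks A G 0 (-D)) *
        Matrix.fromRows X (1 : Matrix (Fin N) (Fin N) ℝ)) *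
      NormedSpace.exp (h • D) :=
  Matrix.exp_smul_apply_add_smul_phi_one_eq_fromBlocks A D G X h S hS
end

section
/- (Forward recursion for φ-function combinations) Let L be a linear endomorphism of a finite-dimensional real normed vector space V, let k ≥ 1, and let N_0, N_1, …, N_k ∈ V. Define W_0 = N_0 and W_j = L(W_{j−1}) + N_j for j = 1, …, k. Then Σ_{j=0}^{k} φ_j(L)(N_j) = φ_k(L)(W_k) + Σ_{j=0}^{k−1} (1/j!)·W_j. -/
open MeasureTheory intervalIntegral Finset

/-!
Everything rests on the identity `φⱼ₊₁(L) ∘ L = φⱼ(L) − (1/j!)·I`, obtained by integrating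
`d/dθ [θ^{j+1}/(j+1)! · e^{(1−θ)L}] = θʲ/j! · e^{(1−θ)L} − θ^{j+1}/(j+1)! · e^{(1−θ)L} L`
over `[0, 1]` (and `d/dθ e^{(1−θ)L} = −e^{(1−θ)L} L` for `j = 0`). Applied to `W_k` it rewrites
`φ_k(L)(W_k)` as `φ_{k+1}(L)(L W_k) + W_k/k!`, which is exactly the induction step `k → k + 1`;
the case `k = 0` is `W₀ = N₀`.
-/

open NormedSpace Nat

section ExpIntegrand

variable {𝔸 : Type*} [NormedRing 𝔸] [NormedAlgebra ℝ 𝔸] [CompleteSpace 𝔸]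

theorem integral_mul_const_of_intervalIntegrable {f : ℝ → 𝔸} {a b : ℝ}
    (hf : IntervalIntegrable f volume a b) (c : 𝔸) :
    ∫ x in a..b, f x * c = (∫ x in a..b, f x) * c :=
  ((ContinuousLinearMap.mul ℝ 𝔸).flip c).intervalIntegral_comp_comm hf

theorem hasDerivAt_exp_one_sub_smul (a : 𝔸) (θ : ℝ) :
    HasDerivAt (fun θ : ℝ => exp ((1 - θ) • a)) (-(exp ((1 - θ) • a) * a)) θ := by
  have h := (hasDerivAt_exp_smul_const a (1 - θ)).scomp θ ((hasDerivAt_id θ).const_sub 1)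
  rwa [neg_one_smul] at h

theorem continuous_exp_one_sub_smul (a : 𝔸) : Continuous fun θ : ℝ => exp ((1 - θ) • a) :=
  continuous_iff_continuousAt.2 fun θ => (hasDerivAt_exp_one_sub_smul a θ).continuousAt

theorem continuous_pow_div_factorial_smul_exp_one_sub_smul (a : 𝔸) (j : ℕ) :
    Continuous fun θ : ℝ => (θ ^ j / (j ! : ℝ)) • exp ((1 - θ) • a) :=
  ((continuous_pow j).div_const _).smul (continuous_exp_one_sub_smul a)

theorem hasDerivAt_pow_div_factorial_smul_exp_one_sub_smul (a : 𝔸) (j : ℕ) (θ : ℝ) :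
    HasDerivAt (fun θ : ℝ => (θ ^ (j + 1) / ((j + 1) ! : ℝ)) • exp ((1 - θ) • a))
      ((θ ^ j / (j ! : ℝ)) • exp ((1 - θ) • a)
        - (θ ^ (j + 1) / ((j + 1) ! : ℝ)) • (exp ((1 - θ) • a) * a)) θ := by
  have hcoeff : ((j + 1 : ℕ) : ℝ) * θ ^ (j + 1 - 1) / ((j + 1) ! : ℝ) = θ ^ j / (j ! : ℝ) := by
    rw [add_tsub_cancel_right, factorial_succ, cast_mul, mul_div_mul_left _ _ (by positivity)]
  refine (((hasDerivAt_pow (j + 1) θ).div_const _).smul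
    (hasDerivAt_exp_one_sub_smul a θ)).congr_deriv ?_
  rw [hcoeff, smul_neg, neg_add_eq_sub]

end ExpIntegrand

section Phi

variable {V : Type*} [NormedAddCommGroup V] [NormedSpace ℝ V]

theorem phi_succ (j : ℕ) (L : V →L[ℝ] V) :
    phi (j + 1) L = ∫ θ in (0 : ℝ)..1, (θ ^ j / (j ! : ℝ)) • exp ((1 - θ) • L) := by
  simp [phi]

variable [CompleteSpace V]

theorem phi_one_mul (L : V →L[ℝ] V) : phi 1 L * L = exp L - 1 := by
  have hFTC := integral_eq_sub_of_hasDerivAt (fun θ _ => hasDerivAt_exp_one_sub_smul L θ)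
    (((continuous_exp_one_sub_smul L).mul continuous_const).neg.intervalIntegrable 0 1)
  rw [intervalIntegral.integral_neg, sub_self, zero_smul, exp_zero, sub_zero, one_smul,
    integral_mul_const_of_intervalIntegrable
      ((continuous_exp_one_sub_smul L).intervalIntegrable 0 1)] at hFTC
  simp only [phi_succ, pow_zero, factorial_zero, cast_one, div_one, one_smul]
  rw [← neg_sub, ← hFTC, neg_neg]

theorem phi_succ_succ_mul (j : ℕ) (L : V →L[ℝ] V) :
    phi (j + 2) L * L = phi (j + 1) L - (((j + 1) ! : ℝ))⁻¹ • 1 := by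
  have hint (i : ℕ) := (continuous_pow_div_factorial_smul_exp_one_sub_smul L i).intervalIntegrable
    (μ := volume) 0 1
  have hint_mul := (hint (j + 1)).mul_continuousOn (continuousOn_const (c := L))
  have hFTC := integral_eq_sub_of_hasDerivAt
    (fun θ _ => hasDerivAt_pow_div_factorial_smul_exp_one_sub_smul L j θ)
    ((hint j).sub hint_mul)
  simp_rw [← smul_mul_assoc] at hFTC
  rw [intervalIntegral.integral_sub (hint j) hint_mul,
    integral_mul_const_of_intervalIntegrable (hint (j + 1))] at hFTC
  simp only [one_pow, sub_self, zero_pow (succ_ne_zero j), zero_div, zero_smul, exp_zero,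
    sub_zero, one_div] at hFTC
  rw [phi_succ (j + 1), phi_succ j, ← hFTC]
  abel

theorem phi_succ_mul (j : ℕ) (L : V →L[ℝ] V) :
    phi (j + 1) L * L = phi j L - ((j ! : ℝ))⁻¹ • 1 := by
  cases j with
  | zero => simpa [phi] using phi_one_mul L
  | succ j => exact phi_succ_succ_mul j L

theorem phi_succ_apply_apply (j : ℕ) (L : V →L[ℝ] V) (x : V) :
    phi (j + 1) L (L x) = phi j L x - ((j ! : ℝ))⁻¹ • x := by
  simpa using congrArg (· x) (phi_succ_mul j L)

end Phi

theorem phi_forward_recursion_general {V : Type*} [NormedAddCommGroup V] [NormedSpace ℝ V]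
    [FiniteDimensional ℝ V] (L : V →L[ℝ] V) (k : ℕ) (Nv : ℕ → V)
    (W : ℕ → V) (hW0 : W 0 = Nv 0)
    (hW : ∀ j, 1 ≤ j → j ≤ k → W j = L (W (j - 1)) + Nv j) :
    ∑ j ∈ Finset.range (k + 1), phi j L (Nv j) =
      phi k L (W k) + ∑ j ∈ Finset.range k, ((Nat.factorial j : ℝ))⁻¹ • W j := by
  induction k with
  | zero => simp [hW0]
  | succ k ih =>
    have hWk : W (k + 1) = L (W k) + Nv (k + 1) := hW (k + 1) k.succ_pos le_rfl
    rw [sum_range_succ, ih fun j hj hjk => hW j hj (hjk.trans k.le_succ),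
      sum_range_succ (n := k), hWk, map_add, phi_succ_apply_apply]
    abel

/-- **forward recursion.** With `W₀ = N₀` and `Wⱼ = L(W_{j−1}) + Nⱼ`
for `j = 1, …, k`, one has
`Σ_{j=0}^{k} φⱼ(L)(Nⱼ) = φ_k(L)(W_k) + Σ_{j=0}^{k−1} (1/j!)·Wⱼ`. -/
theorem phi_forward_recursion {V : Type*} [NormedAddCommGroup V] [NormedSpace ℝ V]
    [FiniteDimensional ℝ V] (L : V →L[ℝ] V) (k : ℕ) (hk : 1 ≤ k) (Nv : ℕ → V)
    (W : ℕ → V) (hW0 : W 0 = Nv 0)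
    (hW : ∀ j, 1 ≤ j → j ≤ k → W j = L (W (j - 1)) + Nv j) :
    ∑ j ∈ Finset.range (k + 1), phi j L (Nv j) =
      phi k L (W k) + ∑ j ∈ Finset.range k, ((Nat.factorial j : ℝ))⁻¹ • W j :=
  phi_forward_recursion_general L k Nv W hW0 hW
end

section
/- (Low-rank LDL^T factorization of the Riccati residual) Let A ∈ ℝ^{N×N}, C ∈ ℝ^{l×N}, B ∈ ℝ^{N×q}, L_n ∈ ℝ^{N×r}, and let D_n ∈ ℝ^{r×r} be symmetric. Set X_n = L_n·D_n·L_n^T and F_n = C^T·C + A·X_n + X_n·A^T − X_n·B·B^T·X_n. Then F_n = L̃·D̃·L̃^T, where L̃ = [C^T, A·L_n, L_n] ∈ ℝ^{N×(l+2r)} is the block row matrix and D̃ ∈ ℝ^{(l+2r)×(l+2r)} is the symmetric block matrix with blocks [[I_l, 0, 0], [0, 0, D_n], [0, D_n, −(D_n·L_n^T·B)·(D_n·L_n^T·B)^T]]. -/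
/-! Expanding `L̃ D̃ L̃ᵀ` block by block gives `CᵀC + A Xₙ + Xₙ Aᵀ − Lₙ (Dₙ Lₙᵀ B)(Dₙ Lₙᵀ B)ᵀ Lₙᵀ`,
and the symmetry of `Dₙ` identifies the last term with `Xₙ B Bᵀ Xₙ`. -/

open Matrix

namespace Matrix

variable {R m n₁ n₂ k : Type*} [CommSemiring R] [Fintype n₁] [Fintype n₂]

theorem fromCols_mul_fromBlocks_mul_transpose_fromCols (P : Matrix m n₁ R) (Q : Matrix m n₂ R)
    (D₁₁ : Matrix n₁ n₁ R) (D₁₂ : Matrix n₁ n₂ R) (D₂₁ : Matrix n₂ n₁ R)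
    (D₂₂ : Matrix n₂ n₂ R) :
    fromCols P Q * fromBlocks D₁₁ D₁₂ D₂₁ D₂₂ * (fromCols P Q)ᵀ =
      P * D₁₁ * Pᵀ + P * D₁₂ * Qᵀ + Q * D₂₁ * Pᵀ + Q * D₂₂ * Qᵀ := by
  rw [transpose_fromCols, fromCols_mul_fromBlocks, fromCols_mul_fromRows]
  simp only [Matrix.add_mul]
  abel

variable [Fintype m] [Fintype k]

theorem ldl_mul_mul_transpose_mul_ldl {D : Matrix n₁ n₁ R} (hD : Dᵀ = D) (L : Matrix m n₁ R)
    (B : Matrix m k R) :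
    L * D * Lᵀ * B * Bᵀ * (L * D * Lᵀ) = L * ((D * Lᵀ * B) * (D * Lᵀ * B)ᵀ) * Lᵀ := by
  simp only [transpose_mul, transpose_transpose, hD, Matrix.mul_assoc]

end Matrix

/-- **low-rank LDLᵀ factorization of the Riccati residual.**
With `Xₙ = Lₙ·Dₙ·Lₙᵀ` and `Fₙ = Cᵀ·C + A·Xₙ + Xₙ·Aᵀ − Xₙ·B·Bᵀ·Xₙ`, one has
`Fₙ = L̃·D̃·L̃ᵀ`, where `L̃ = [Cᵀ, A·Lₙ, Lₙ]` and `D̃` is the symmetric block matrix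
`[[I_l, 0, 0], [0, 0, Dₙ], [0, Dₙ, −(Dₙ·Lₙᵀ·B)·(Dₙ·Lₙᵀ·B)ᵀ]]`. -/
theorem riccati_residual_ldl_factorization (Nn l q r : ℕ)
    (A : Matrix (Fin Nn) (Fin Nn) ℝ) (C : Matrix (Fin l) (Fin Nn) ℝ)
    (B : Matrix (Fin Nn) (Fin q) ℝ) (Ln : Matrix (Fin Nn) (Fin r) ℝ)
    (Dn : Matrix (Fin r) (Fin r) ℝ) (hDn : Dnᵀ = Dn)
    (Xn : Matrix (Fin Nn) (Fin Nn) ℝ) (hXn : Xn = Ln * Dn * Lnᵀ)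
    (Fn : Matrix (Fin Nn) (Fin Nn) ℝ)
    (hFn : Fn = Cᵀ * C + A * Xn + Xn * Aᵀ - Xn * B * Bᵀ * Xn) :
    Fn =
      (Matrix.fromCols Cᵀ (Matrix.fromCols (A * Ln) Ln)) *
        (Matrix.fromBlocks (1 : Matrix (Fin l) (Fin l) ℝ) 0 0
          (Matrix.fromBlocks 0 Dn Dn (-((Dn * Lnᵀ * B) * (Dn * Lnᵀ * B)ᵀ)))) *
        (Matrix.fromCols Cᵀ (Matrix.fromCols (A * Ln) Ln))ᵀ := by
  subst hXn hFn
  rw [fromCols_mul_fromBlocks_mul_transpose_fromCols,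
    fromCols_mul_fromBlocks_mul_transpose_fromCols, ldl_mul_mul_transpose_mul_ldl hDn]
  simp only [transpose_fromCols, Matrix.mul_zero, Matrix.zero_mul, Matrix.mul_one, add_zero,
    zero_add, transpose_mul, Matrix.mul_neg, Matrix.neg_mul, transpose_transpose, Matrix.mul_assoc]
  abel
end
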